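/- arXiv:2505.01704 — 4 statements merged into one kernel-verified Lean document; each statement's English description precedes it below -/
import Mathlib

section
/- For every M > 0 and β > 0 there exists a constant C > 0 (depending only on M and β) such that for all ε with 0 < ε < 1/(8β) and all r > 0 satisfying √ε · r ≤ M, one has K₀(√(2βε) · r)² ≤ C · (1 + |log r|)² · K₀(√(2βε(1 + r²)))². -/
open MeasureTheory Filter Set Topology

/-- Macdonald function `K₀`, via its integral representation. -/
noncomputable def K0 (x : ℝ) : ℝ := ∫ t in Set.Ioi (0 : ℝ), Real.exp (-x * Real.cosh t)

/-!
Both sides are compared through `log⁺`. For every `x > 0`, `K₀ x ≤ 2 + log⁺ x⁻¹`: on `(0, T]` the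
integrand is at most `1`, and beyond `T` it is at most `(2 / x) e⁻ᵗ` because `e^{-y} ≤ 1 / y`
and `cosh t ≥ eᵗ / 2`. Conversely `K₀ s ≥ T e^{-s eᵀ}` by integrating over `(0, T]` only, and
`T = 1 + log⁺ s⁻¹` gives `1 + log⁺ s⁻¹ ≤ e^{e · max 1 s} K₀ s`.

With `x = √(2βε) r` and `s = √(2βε(1 + r²))` we have `x⁻¹ = s⁻¹ · √(1 + r²) / r` and
`log⁺ (√(1 + r²) / r) ≤ 1 + |log r|`, so `log⁺ x⁻¹ ≤ log⁺ s⁻¹ + 1 + |log r|`. The constraints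
`2βε < 1/4` and `√ε r ≤ M` keep `s ≤ √(1 + 2βM²)`, which bounds the factor `e^{e · max 1 s}`
uniformly.
-/

open Real

lemma exp_div_two_le_cosh (t : ℝ) : exp t / 2 ≤ cosh t := by
  rw [cosh_eq]; linarith [exp_pos (-t)]

lemma cosh_le_exp_of_nonneg {t : ℝ} (ht : 0 ≤ t) : cosh t ≤ exp t := by
  rw [cosh_eq]; linarith [exp_le_exp.2 (show -t ≤ t by linarith)]

lemma exp_neg_le_one_div {y : ℝ} (hy : 0 < y) : exp (-y) ≤ 1 / y := by
  rw [le_div_iff₀ hy, mul_comm]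
  exact (mul_exp_neg_le_exp_neg_one y).trans (exp_le_one_iff.2 (by norm_num))

lemma exp_neg_mul_cosh_le {x : ℝ} (hx : 0 < x) (t : ℝ) :
    exp (-x * cosh t) ≤ 2 / x * exp (-t) :=
  calc exp (-x * cosh t) = exp (-(x * cosh t)) := by rw [neg_mul]
    _ ≤ 1 / (x * cosh t) := exp_neg_le_one_div (by positivity)
    _ ≤ 1 / (x * (exp t / 2)) := by gcongr; exact exp_div_two_le_cosh t
    _ = 2 / x * exp (-t) := by rw [exp_neg]; field_simp

lemma integrableOn_exp_neg_mul_cosh {x : ℝ} (hx : 0 < x) (T : ℝ) :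
    IntegrableOn (fun t => exp (-x * cosh t)) (Ioi T) := by
  refine Integrable.mono' ((integrableOn_exp_neg_Ioi T).const_mul (2 / x)) (by fun_prop) ?_
  filter_upwards with t
  rw [norm_of_nonneg (exp_pos _).le]
  exact exp_neg_mul_cosh_le hx t

lemma K0_nonneg (x : ℝ) : 0 ≤ K0 x :=
  setIntegral_nonneg measurableSet_Ioi fun _ _ => (exp_pos _).le

lemma K0_le_add_mul_exp_neg {x T : ℝ} (hx : 0 < x) (hT : 0 ≤ T) :
    K0 x ≤ T + 2 / x * exp (-T) := by
  have hint := integrableOn_exp_neg_mul_cosh hx 0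
  have hnear : ∫ t in Ioc 0 T, exp (-x * cosh t) ≤ T := by
    calc ∫ t in Ioc 0 T, exp (-x * cosh t) ≤ ∫ _ in Ioc 0 T, (1 : ℝ) := by
          refine setIntegral_mono_on (hint.mono_set Ioc_subset_Ioi_self)
            (integrableOn_const measure_Ioc_lt_top.ne) measurableSet_Ioc fun t _ => ?_
          rw [exp_le_one_iff]
          nlinarith [cosh_pos t]
      _ = T := by simp [hT]
  have hfar : ∫ t in Ioi T, exp (-x * cosh t) ≤ 2 / x * exp (-T) := by
    calc ∫ t in Ioi T, exp (-x * cosh t) ≤ ∫ t in Ioi T, 2 / x * exp (-t) :=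
          setIntegral_mono_on (integrableOn_exp_neg_mul_cosh hx T)
            ((integrableOn_exp_neg_Ioi T).const_mul _) measurableSet_Ioi
            fun t _ => exp_neg_mul_cosh_le hx t
      _ = 2 / x * exp (-T) := by rw [integral_const_mul, integral_exp_neg_Ioi]
  rw [K0, ← Ioc_union_Ioi_eq_Ioi hT, setIntegral_union Ioc_disjoint_Ioi_same measurableSet_Ioi
    (hint.mono_set Ioc_subset_Ioi_self) (integrableOn_exp_neg_mul_cosh hx T)]
  exact add_le_add hnear hfar

lemma K0_le_two_add_posLog_inv {x : ℝ} (hx : 0 < x) : K0 x ≤ 2 + log⁺ x⁻¹ := by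
  have hT : log⁺ (2 / x) = log (max 1 (2 / x)) := posLog_eq_log_max_one (by positivity)
  have htail : 2 / x * exp (-log⁺ (2 / x)) ≤ 1 := by
    rw [hT, exp_neg, exp_log (by positivity), ← div_eq_mul_inv,
      div_le_one (by positivity)]
    exact le_max_right _ _
  have hhead : log⁺ (2 / x) ≤ 1 + log⁺ x⁻¹ := by
    calc log⁺ (2 / x) ≤ log⁺ 2 + log⁺ x⁻¹ := by rw [div_eq_mul_inv]; exact posLog_mul
      _ ≤ 1 + log⁺ x⁻¹ := by
        rw [posLog_eq_log (by norm_num)]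
        linarith [log_two_lt_d9]
  linarith [K0_le_add_mul_exp_neg hx (posLog_nonneg (x := 2 / x))]

lemma mul_exp_neg_mul_exp_le_K0 {x T : ℝ} (hx : 0 < x) (hT : 0 ≤ T) :
    T * exp (-x * exp T) ≤ K0 x := by
  have hint := integrableOn_exp_neg_mul_cosh hx 0
  calc T * exp (-x * exp T) = ∫ _ in Ioc 0 T, exp (-x * exp T) := by simp [hT]
    _ ≤ ∫ t in Ioc 0 T, exp (-x * cosh t) := by
        refine setIntegral_mono_on (integrableOn_const measure_Ioc_lt_top.ne)
          (hint.mono_set Ioc_subset_Ioi_self) measurableSet_Ioc fun t ht => ?_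
        have : cosh t ≤ exp T := (cosh_le_exp_of_nonneg ht.1.le).trans (exp_le_exp.2 ht.2)
        exact exp_le_exp.2 (by nlinarith)
    _ ≤ K0 x := setIntegral_mono_set hint
        (Eventually.of_forall fun _ => (exp_pos _).le) Ioc_subset_Ioi_self.eventuallyLE

lemma one_add_posLog_inv_le_K0 {s : ℝ} (hs : 0 < s) :
    1 + log⁺ s⁻¹ ≤ exp (exp 1 * max 1 s) * K0 s := by
  have hT : 1 + log⁺ s⁻¹ = 1 + log (max 1 s⁻¹) := by rw [posLog_eq_log_max_one (by positivity)]
  have hsT : s * exp (1 + log⁺ s⁻¹) = exp 1 * max 1 s := by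
    rw [hT, exp_add, exp_log (by positivity), mul_left_comm, mul_max_of_nonneg _ _ hs.le,
      mul_one, mul_inv_cancel₀ hs.ne', max_comm]
  have := mul_exp_neg_mul_exp_le_K0 hs (add_nonneg zero_le_one (posLog_nonneg (x := s⁻¹)))
  rw [neg_mul, hsT, exp_neg, ← div_eq_mul_inv, div_le_iff₀ (exp_pos _)] at this
  linarith

lemma posLog_inv_le_abs_log (r : ℝ) : log⁺ r⁻¹ ≤ |log r| := by
  rw [posLog_apply, log_inv]
  exact max_le (abs_nonneg _) (neg_le_abs _)

lemma posLog_sqrt_one_add_sq_div_le {r : ℝ} (hr : 0 < r) :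
    log⁺ (√(1 + r ^ 2) / r) ≤ 1 + |log r| := by
  have hsqrt : √(1 + r ^ 2) ≤ 1 + r := sqrt_le_iff.2 ⟨by positivity, by nlinarith⟩
  calc log⁺ (√(1 + r ^ 2) / r) ≤ log⁺ (1 + r⁻¹) := by
        refine posLog_le_posLog (by positivity) ?_
        rw [div_le_iff₀ hr, add_mul, inv_mul_cancel₀ hr.ne', one_mul, add_comm r]
        exact hsqrt
    _ ≤ log 2 + log⁺ 1 + log⁺ r⁻¹ := posLog_add
    _ ≤ 1 + |log r| := by
        rw [posLog_one]
        linarith [log_two_lt_d9, posLog_inv_le_abs_log r]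

lemma K0_le_mul_K0 {x s L : ℝ} (hx : 0 < x) (hs : 0 < s) (hL : 1 ≤ L)
    (h : log⁺ x⁻¹ ≤ log⁺ s⁻¹ + L) :
    K0 x ≤ 3 * exp (exp 1 * max 1 s) * L * K0 s := by
  have hP : 0 ≤ log⁺ s⁻¹ := posLog_nonneg
  calc K0 x ≤ 2 + log⁺ s⁻¹ + L := by linarith [K0_le_two_add_posLog_inv hx]
    _ ≤ 3 * L * (1 + log⁺ s⁻¹) := by nlinarith
    _ ≤ 3 * L * (exp (exp 1 * max 1 s) * K0 s) := by
        gcongr; exact one_add_posLog_inv_le_K0 hs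
    _ = 3 * exp (exp 1 * max 1 s) * L * K0 s := by ring

theorem K0_squared_domination_general (M β : ℝ) (hβ : 0 < β) :
    ∃ C : ℝ, 0 < C ∧ ∀ ε : ℝ, 0 < ε → ε < 1 / (8 * β) →
      ∀ r : ℝ, 0 < r → Real.sqrt ε * r ≤ M →
        K0 (Real.sqrt (2 * β * ε) * r) ^ 2
          ≤ C * (1 + |Real.log r|) ^ 2 * K0 (Real.sqrt (2 * β * ε * (1 + r ^ 2))) ^ 2 := by
  set B := √(1 + 2 * β * M ^ 2)
  refine ⟨(3 * exp (exp 1 * B)) ^ 2, by positivity, fun ε hε hεβ r hr hrM => ?_⟩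
  set s := √(2 * β * ε * (1 + r ^ 2))
  have hs : 0 < s := by positivity
  have hsB : max 1 s ≤ B := by
    have hεr : ε * r ^ 2 ≤ M ^ 2 := by
      rw [← sq_sqrt hε.le, ← mul_pow]
      exact pow_le_pow_left₀ (by positivity) hrM 2
    have h8 : 8 * β * ε < 1 := by rwa [lt_div_iff₀ (by positivity), mul_comm] at hεβ
    exact max_le (one_le_sqrt.2 (by nlinarith)) (sqrt_le_sqrt (by nlinarith))
  have hinv : (√(2 * β * ε) * r)⁻¹ = s⁻¹ * (√(1 + r ^ 2) / r) := by
    rw [show s = √(2 * β * ε) * √(1 + r ^ 2) from sqrt_mul (by positivity) _]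
    field_simp
  have hlog : log⁺ (√(2 * β * ε) * r)⁻¹ ≤ log⁺ s⁻¹ + (1 + |log r|) := by
    rw [hinv]
    refine posLog_mul.trans ?_
    gcongr
    exact posLog_sqrt_one_add_sq_div_le hr
  have hK : K0 (√(2 * β * ε) * r) ≤ 3 * exp (exp 1 * B) * (1 + |log r|) * K0 s :=
    (K0_le_mul_K0 (by positivity) hs (by linarith [abs_nonneg (log r)]) hlog).trans
      (by gcongr; exact K0_nonneg s)
  calc K0 (√(2 * β * ε) * r) ^ 2 ≤ (3 * exp (exp 1 * B) * (1 + |log r|) * K0 s) ^ 2 :=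
        pow_le_pow_left₀ (K0_nonneg _) hK 2
    _ = (3 * exp (exp 1 * B)) ^ 2 * (1 + |log r|) ^ 2 * K0 s ^ 2 := by ring

/-- The domination bound from the proof of Lemma 4.2: for every `M > 0` and `β > 0`
there is `C > 0` such that for `0 < ε < 1/(8β)` and `r > 0` with `√ε · r ≤ M`,
`K₀(√(2βε) r)² ≤ C (1 + |log r|)² K₀(√(2βε(1 + r²)))²`. -/
theorem K0_squared_domination (M β : ℝ) (hM : 0 < M) (hβ : 0 < β) :
    ∃ C : ℝ, 0 < C ∧ ∀ ε : ℝ, 0 < ε → ε < 1 / (8 * β) →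
      ∀ r : ℝ, 0 < r → Real.sqrt ε * r ≤ M →
        K0 (Real.sqrt (2 * β * ε) * r) ^ 2
          ≤ C * (1 + |Real.log r|) ^ 2 * K0 (Real.sqrt (2 * β * ε * (1 + r ^ 2))) ^ 2 :=
  K0_squared_domination_general M β hβ
end

section
/- Let K̂₁(x) = x K₁(x). For every M > 0, the integral ∫₀^M [1/(K₀(y) · (ε + y²))] · ( K̂₁(√(ε + y²))/K₀(√(ε + y²)) − K̂₁(y)/K₀(y) ) · y K₀(y)² dy is nonnegative for every ε > 0 and converges to 0 as ε → 0+. -/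
/-!
Write `R = K̂₁ / K₀` and `s = √(ε + y²)`. Differentiating under the integral sign gives
`K₀' = -K₁` and, after an integration by parts, `K̂₁' = -x K₀`; hence
`R' = x (K₁² - K₀²) / K₀² ≥ 0`, which is the nonnegativity.

For the limit: `K̂₁` is decreasing and at most `1`, and `K₀(y) - K₀(s) ≤ (s - y) K₁(y)`, so the
integrand is at most `√ε / ((ε + y²) K₀(s))`, a Poisson kernel of width `√ε` and mass `π / 2`
damped by `1 / K₀(s)`. Where `y² ≤ √ε` the damping is at most `1 / K₀(√(ε + √ε)) → 0`, because
`K₀(x) ≥ e⁻¹ log (1 / x)`; where `y² ≥ √ε` the kernel is at most `2 ε^{1/4}` times the Poisson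
kernel of width `ε^{1/4}`.
-/

open MeasureTheory Filter Set Topology

/-- Macdonald function `K₁`, via its integral representation. -/
noncomputable def K1 (x : ℝ) : ℝ :=
  ∫ t in Set.Ioi (0 : ℝ), Real.exp (-x * Real.cosh t) * Real.cosh t

/-- `K̂₁(x) = x K₁(x)`. -/
noncomputable def hatK1 (x : ℝ) : ℝ := x * K1 x

open Real

lemma self_le_cosh (t : ℝ) : t ≤ cosh t := by
  rcases le_or_gt t 0 with ht | ht
  · exact ht.trans (cosh_pos t).le
  · exact (self_lt_sinh_iff.2 ht).le.trans (sinh_lt_cosh t).le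

lemma exp_neg_mul_cosh_mul_cosh_pow_le {c y : ℝ} (hc : 0 < c) (hcy : c ≤ y) (n : ℕ) (t : ℝ) :
    exp (-y * cosh t) * cosh t ^ n ≤ n.factorial * (2 / c) ^ n * exp (-(c / 2) * t) := by
  have hpow : cosh t ^ n ≤ n.factorial * (2 / c) ^ n * exp (c / 2 * cosh t) := by
    have h := pow_div_factorial_le_exp (c / 2 * cosh t) (by positivity) n
    rw [div_le_iff₀ (by positivity)] at h
    calc cosh t ^ n = (2 / c) ^ n * (c / 2 * cosh t) ^ n := by
          rw [← mul_pow]; field_simp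
      _ ≤ (2 / c) ^ n * (exp (c / 2 * cosh t) * n.factorial) := by gcongr
      _ = n.factorial * (2 / c) ^ n * exp (c / 2 * cosh t) := by ring
  calc exp (-y * cosh t) * cosh t ^ n
      ≤ exp (-c * cosh t) * (n.factorial * (2 / c) ^ n * exp (c / 2 * cosh t)) := by
        gcongr
    _ = n.factorial * (2 / c) ^ n * exp (-(c / 2) * cosh t) := by
        rw [mul_left_comm, ← exp_add]; ring_nf
    _ ≤ n.factorial * (2 / c) ^ n * exp (-(c / 2) * t) :=
        mul_le_mul_of_nonneg_left (exp_le_exp.2 (by nlinarith [self_le_cosh t])) (by positivity)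

lemma integrableOn_exp_neg_mul_cosh_mul_cosh_pow {x : ℝ} (hx : 0 < x) (n : ℕ) :
    IntegrableOn (fun t => exp (-x * cosh t) * cosh t ^ n) (Ioi 0) :=
  ((exp_neg_integrableOn_Ioi 0 (half_pos hx)).const_mul (n.factorial * (2 / x) ^ n)).mono'
    (by fun_prop : Continuous fun t => exp (-x * cosh t) * cosh t ^ n).aestronglyMeasurable
    (ae_of_all _ fun t => by
      rw [Real.norm_of_nonneg (by positivity)]
      exact exp_neg_mul_cosh_mul_cosh_pow_le hx le_rfl n t)

noncomputable def coshMoment (n : ℕ) (x : ℝ) : ℝ :=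
  ∫ t in Ioi (0 : ℝ), exp (-x * cosh t) * cosh t ^ n

lemma K0_eq_coshMoment : K0 = coshMoment 0 := by
  funext x; simp [K0, coshMoment]

lemma K1_eq_coshMoment : K1 = coshMoment 1 := by
  funext x; simp [K1, coshMoment]

lemma hasDerivAt_coshMoment (n : ℕ) {x : ℝ} (hx : 0 < x) :
    HasDerivAt (coshMoment n) (-coshMoment (n + 1) x) x := by
  have hdiff := hasDerivAt_integral_of_dominated_loc_of_deriv_le
    (μ := volume.restrict (Ioi 0)) (F := fun y t => exp (-y * cosh t) * cosh t ^ n)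
    (F' := fun y t => -(exp (-y * cosh t) * cosh t ^ (n + 1)))
    (bound := fun t => (n + 1).factorial * (2 / (x / 2)) ^ (n + 1) * exp (-(x / 2 / 2) * t))
    (Ioi_mem_nhds (half_lt_self hx))
    (Eventually.of_forall fun y => (by fun_prop : Continuous _).aestronglyMeasurable)
    (integrableOn_exp_neg_mul_cosh_mul_cosh_pow hx n)
    (by fun_prop : Continuous _).aestronglyMeasurable
    (ae_of_all _ fun t y hy => by
      rw [norm_neg, Real.norm_of_nonneg (by positivity)]
      exact exp_neg_mul_cosh_mul_cosh_pow_le (half_pos hx) (le_of_lt hy) (n + 1) t)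
    ((exp_neg_integrableOn_Ioi 0 (by positivity)).const_mul _)
    (ae_of_all _ fun t y _ => by
      have h := (((hasDerivAt_neg y).mul_const (cosh t)).exp).mul_const (cosh t ^ n)
      exact h.congr_deriv (by ring))
  have h := hdiff.2
  rw [integral_neg] at h
  exact h

lemma hasDerivAt_K0 {x : ℝ} (hx : 0 < x) : HasDerivAt K0 (-K1 x) x := by
  simpa [K0_eq_coshMoment, K1_eq_coshMoment] using hasDerivAt_coshMoment 0 hx

lemma tendsto_exp_neg_mul_cosh_mul_sinh {x : ℝ} (hx : 0 < x) :
    Tendsto (fun t => exp (-x * cosh t) * sinh t) atTop (𝓝 0) := by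
  have hdecay : Tendsto (fun t => (1 : ℕ).factorial * (2 / x) ^ 1 * exp (-(x / 2) * t))
      atTop (𝓝 0) := by
    simpa using (tendsto_exp_atBot.comp
      (tendsto_id.const_mul_atTop_of_neg (neg_neg_of_pos (half_pos hx)))).const_mul (2 / x)
  refine squeeze_zero' ?_ ?_ hdecay
  · filter_upwards [eventually_ge_atTop 0] with t ht
    have := sinh_nonneg_iff.2 ht
    positivity
  · filter_upwards with t
    refine le_trans ?_ (exp_neg_mul_cosh_mul_cosh_pow_le hx le_rfl 1 t)
    rw [pow_one]
    exact mul_le_mul_of_nonneg_left (sinh_lt_cosh t).le (exp_pos _).le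

/-- Integration by parts against `d/dt (exp (-x cosh t) sinh t)`. -/
lemma mul_coshMoment_two {x : ℝ} (hx : 0 < x) :
    x * coshMoment 2 x = K1 x + x * K0 x := by
  have hint := integrableOn_exp_neg_mul_cosh_mul_cosh_pow hx
  have hderiv : ∀ t ∈ Ioi (0 : ℝ), HasDerivAt (fun t => exp (-x * cosh t) * sinh t)
      (exp (-x * cosh t) * cosh t ^ 1 + x * (exp (-x * cosh t) * cosh t ^ 0)
        - x * (exp (-x * cosh t) * cosh t ^ 2)) t := fun t _ => by
    have h := (((hasDerivAt_cosh t).const_mul (-x)).exp).mul (hasDerivAt_sinh t)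
    refine h.congr_deriv ?_
    rw [cosh_sq']
    ring
  have hint_lin : IntegrableOn (fun t => exp (-x * cosh t) * cosh t ^ 1
      + x * (exp (-x * cosh t) * cosh t ^ 0)) (Ioi 0) := (hint 1).add ((hint 0).const_mul x)
  have h := integral_Ioi_of_hasDerivAt_of_tendsto
    (by fun_prop : Continuous fun t => exp (-x * cosh t) * sinh t).continuousWithinAt hderiv
    (hint_lin.sub ((hint 2).const_mul x)) (tendsto_exp_neg_mul_cosh_mul_sinh hx)
  rw [integral_sub hint_lin ((hint 2).const_mul x),
    integral_add (hint 1) ((hint 0).const_mul x), integral_const_mul, integral_const_mul] at h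
  rw [K0_eq_coshMoment, K1_eq_coshMoment]
  simp only [coshMoment]
  simp only [sinh_zero, mul_zero, sub_zero] at h
  linarith

lemma hasDerivAt_hatK1 {x : ℝ} (hx : 0 < x) : HasDerivAt hatK1 (-(x * K0 x)) x := by
  have h := (hasDerivAt_id x).mul (hasDerivAt_coshMoment 1 hx)
  rw [← K1_eq_coshMoment] at h
  refine h.congr_deriv ?_
  simp only [id, one_mul, one_add_one_eq_two]
  linarith [mul_coshMoment_two hx]

lemma K0_pos {x : ℝ} (hx : 0 < x) : 0 < K0 x := by
  have hint := integrableOn_exp_neg_mul_cosh_mul_cosh_pow hx 0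
  simp only [pow_zero, mul_one] at hint
  have : NeZero (volume (Ioi (0 : ℝ))) := ⟨by simp⟩
  exact integral_exp_pos hint

lemma K1_nonneg (x : ℝ) : 0 ≤ K1 x :=
  setIntegral_nonneg measurableSet_Ioi fun t _ => by positivity

lemma K0_le_K1 {x : ℝ} (hx : 0 < x) : K0 x ≤ K1 x := by
  have hint := integrableOn_exp_neg_mul_cosh_mul_cosh_pow hx
  rw [K0_eq_coshMoment, K1_eq_coshMoment]
  refine setIntegral_mono_on (hint 0) (hint 1) measurableSet_Ioi fun t _ => ?_
  simpa using mul_le_mul_of_nonneg_left (one_le_cosh t) (exp_pos (-x * cosh t)).le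

lemma antitoneOn_K0 : AntitoneOn K0 (Ioi 0) := fun x hx y hy hxy => by
  rw [K0_eq_coshMoment]
  refine setIntegral_mono_on (integrableOn_exp_neg_mul_cosh_mul_cosh_pow hy 0)
    (integrableOn_exp_neg_mul_cosh_mul_cosh_pow hx 0) measurableSet_Ioi fun t _ => ?_
  gcongr

/-- The tangent-line inequality for the convex `K₀`; under the integral it is `1 - e⁻ᵘ ≤ u`. -/
lemma K0_sub_K0_le {y s : ℝ} (hy : 0 < y) (hs : 0 < s) : K0 y - K0 s ≤ (s - y) * K1 y := by
  have hinty := integrableOn_exp_neg_mul_cosh_mul_cosh_pow hy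
  have hints := integrableOn_exp_neg_mul_cosh_mul_cosh_pow hs 0
  rw [K0_eq_coshMoment, K1_eq_coshMoment, coshMoment, coshMoment, coshMoment,
    ← integral_sub (hinty 0) hints, ← integral_const_mul]
  refine setIntegral_mono_on ((hinty 0).sub hints) ((hinty 1).const_mul _)
    measurableSet_Ioi fun t _ => ?_
  have hsplit : exp (-s * cosh t) = exp (-y * cosh t) * exp (-((s - y) * cosh t)) := by
    rw [← exp_add]; ring_nf
  have := add_one_le_exp (-((s - y) * cosh t))
  simp only [pow_zero, pow_one, mul_one, hsplit]
  nlinarith [exp_pos (-y * cosh t)]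

lemma hatK1_nonneg {x : ℝ} (hx : 0 ≤ x) : 0 ≤ hatK1 x :=
  mul_nonneg hx (K1_nonneg x)

/-- Since `sinh ≤ cosh`, `x K₁(x) ≤ ∫ x cosh t exp (-x sinh t) dt = 1`. -/
lemma hatK1_le_one {x : ℝ} (hx : 0 < x) : hatK1 x ≤ 1 := by
  have hderiv : ∀ t ∈ Ici (0 : ℝ),
      HasDerivAt (fun t => -exp (-x * sinh t)) (x * cosh t * exp (-x * sinh t)) t :=
    fun t _ => (((hasDerivAt_sinh t).const_mul (-x)).exp.neg).congr_deriv (by ring)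
  have hnonneg : ∀ t ∈ Ioi (0 : ℝ), 0 ≤ x * cosh t * exp (-x * sinh t) :=
    fun t _ => by positivity
  have hsinh : Tendsto sinh atTop atTop :=
    tendsto_atTop_mono' _ (eventually_ge_atTop 0 |>.mono fun t ht => self_le_sinh_iff.2 ht)
      tendsto_id
  have htend : Tendsto (fun t => -exp (-x * sinh t)) atTop (𝓝 0) := by
    simpa using (tendsto_exp_atBot.comp (hsinh.const_mul_atTop_of_neg (neg_neg_of_pos hx))).neg
  have hK1 := integrableOn_exp_neg_mul_cosh_mul_cosh_pow hx 1
  simp only [pow_one] at hK1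
  calc hatK1 x = ∫ t in Ioi 0, x * (exp (-x * cosh t) * cosh t) := integral_const_mul _ _ |>.symm
    _ ≤ ∫ t in Ioi 0, x * cosh t * exp (-x * sinh t) := by
        refine setIntegral_mono_on (hK1.const_mul x)
          (integrableOn_Ioi_deriv_of_nonneg' hderiv hnonneg htend) measurableSet_Ioi fun t _ => ?_
        rw [mul_comm (exp _), ← mul_assoc]
        exact mul_le_mul_of_nonneg_left (exp_le_exp.2 (by nlinarith [sinh_lt_cosh t]))
          (by positivity)
    _ = 1 := by rw [integral_Ioi_of_hasDerivAt_of_nonneg' hderiv hnonneg htend]; simp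

lemma antitoneOn_hatK1 : AntitoneOn hatK1 (Ioi 0) := by
  refine antitoneOn_of_hasDerivWithinAt_nonpos (convex_Ioi 0)
    (fun x hx => (hasDerivAt_hatK1 hx).continuousAt.continuousWithinAt)
    (fun x hx => (hasDerivAt_hatK1 (interior_subset hx)).hasDerivWithinAt) fun x hx => ?_
  rw [interior_Ioi] at hx
  have := K0_pos hx
  have hx : (0 : ℝ) < x := hx
  nlinarith

/-- `(K̂₁/K₀)' = x (K₁² - K₀²) / K₀²`. -/
lemma monotoneOn_hatK1_div_K0 : MonotoneOn (fun x => hatK1 x / K0 x) (Ioi 0) := by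
  have hderiv : ∀ x ∈ Ioi (0 : ℝ), HasDerivAt (fun x => hatK1 x / K0 x)
      ((-(x * K0 x) * K0 x - hatK1 x * -K1 x) / K0 x ^ 2) x :=
    fun x hx => (hasDerivAt_hatK1 hx).div (hasDerivAt_K0 hx) (K0_pos hx).ne'
  refine monotoneOn_of_hasDerivWithinAt_nonneg (convex_Ioi 0)
    (fun x hx => (hderiv x hx).continuousAt.continuousWithinAt)
    (fun x hx => (hderiv x (interior_subset hx)).hasDerivWithinAt) fun x hx => ?_
  rw [interior_Ioi] at hx
  have h0 := K0_pos hx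
  have h01 := K0_le_K1 hx
  have hx : (0 : ℝ) < x := hx
  refine div_nonneg ?_ (sq_nonneg _)
  rw [hatK1]
  nlinarith [mul_le_mul h01 h01 h0.le (h0.trans_le h01).le]

lemma hatK1_div_K0_sub_le {y s : ℝ} (hy : 0 < y) (hys : y ≤ s) :
    hatK1 s / K0 s - hatK1 y / K0 y ≤ (s - y) / (y * K0 y * K0 s) := by
  have hs : 0 < s := hy.trans_le hys
  have hK0y := K0_pos hy
  have hK0s := K0_pos hs
  have hK1y := hatK1_nonneg hy.le
  calc hatK1 s / K0 s - hatK1 y / K0 y ≤ hatK1 y / K0 s - hatK1 y / K0 y := by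
        gcongr
        exact antitoneOn_hatK1 hy hs hys
    _ = hatK1 y * (K0 y - K0 s) / (K0 y * K0 s) := by field_simp
    _ ≤ hatK1 y * ((s - y) * K1 y) / (K0 y * K0 s) := by
        gcongr
        exact K0_sub_K0_le hy hs
    _ = (s - y) * hatK1 y ^ 2 / (y * K0 y * K0 s) := by rw [hatK1]; field_simp
    _ ≤ (s - y) / (y * K0 y * K0 s) := by
        gcongr
        exact mul_le_of_le_one_right (by linarith) (pow_le_one₀ hK1y (hatK1_le_one hy))

lemma exp_neg_one_mul_neg_log_le_K0 {x : ℝ} (hx0 : 0 < x) (hx1 : x < 1) :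
    exp (-1) * -log x ≤ K0 x := by
  have hL : 0 < -log x := neg_pos.2 (log_neg hx0 hx1)
  have hint := integrableOn_exp_neg_mul_cosh_mul_cosh_pow hx0 0
  simp only [pow_zero, mul_one] at hint
  calc exp (-1) * -log x = ∫ _ in Ioc 0 (-log x), exp (-1) := by
        simp [Real.volume_real_Ioc_of_le hL.le, mul_comm]
    _ ≤ ∫ t in Ioc 0 (-log x), exp (-x * cosh t) := by
        refine setIntegral_mono_on (integrableOn_const measure_Ioc_lt_top.ne)
          (hint.mono_set Ioc_subset_Ioi_self) measurableSet_Ioc fun t ht => ?_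
        have hcosh : cosh t ≤ exp t := by
          rw [cosh_eq]; linarith [exp_le_exp.2 (show -t ≤ t by linarith [ht.1])]
        have hexp : x * exp t ≤ 1 := by
          calc x * exp t ≤ x * exp (-log x) := by gcongr; exact ht.2
            _ = 1 := by rw [exp_neg, exp_log hx0]; field_simp
        gcongr
        nlinarith
    _ ≤ K0 x := setIntegral_mono_set hint (ae_of_all _ fun t => (exp_pos _).le)
        Ioc_subset_Ioi_self.eventuallyLE

lemma tendsto_K0_nhdsGT_zero : Tendsto K0 (𝓝[>] 0) atTop := by
  refine tendsto_atTop_mono' _ ?_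
    ((tendsto_neg_atBot_atTop.comp tendsto_log_nhdsGT_zero).const_mul_atTop (exp_pos (-1)))
  filter_upwards [Ioo_mem_nhdsGT zero_lt_one] with x hx
  exact exp_neg_one_mul_neg_log_le_K0 hx.1 hx.2

lemma continuous_sqrt_div_add_sq {c : ℝ} (hc : 0 < c) :
    Continuous fun y : ℝ => √c / (c + y ^ 2) :=
  continuous_const.div (by fun_prop) fun y => by positivity

lemma setIntegral_sqrt_div_add_sq_le {c : ℝ} (hc : 0 < c) (b : ℝ) :
    ∫ y in Ioc 0 b, √c / (c + y ^ 2) ≤ π / 2 := by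
  rcases le_total b 0 with hb | hb
  · simp only [Ioc_eq_empty_of_le hb, Measure.restrict_empty, integral_zero_measure]
    positivity
  have hderiv : ∀ y ∈ uIcc 0 b, HasDerivAt (fun y => arctan (y / √c)) (√c / (c + y ^ 2)) y := by
    intro y _
    refine ((hasDerivAt_id y).div_const √c).arctan.congr_deriv ?_
    simp only [id]
    have hsc : √c ^ 2 = c := sq_sqrt hc.le
    have : 0 < √c := sqrt_pos.2 hc
    field_simp
    rw [hsc]
  rw [← intervalIntegral.integral_of_le hb, intervalIntegral.integral_eq_sub_of_hasDerivAt hderiv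
    ((continuous_sqrt_div_add_sq hc).intervalIntegrable _ _)]
  simpa using (arctan_lt_pi_div_two _).le

noncomputable def singularIntegrand (ε y : ℝ) : ℝ :=
  (1 / (K0 y * (ε + y ^ 2))) * (hatK1 √(ε + y ^ 2) / K0 √(ε + y ^ 2) - hatK1 y / K0 y)
    * (y * K0 y ^ 2)

section singularIntegrand

variable {ε y : ℝ}

lemma le_sqrt_add_sq (hε : 0 ≤ ε) (hy : 0 ≤ y) : y ≤ √(ε + y ^ 2) :=
  (le_sqrt hy (by positivity)).2 (by linarith)

lemma singularIntegrand_nonneg (hε : 0 ≤ ε) (hy : 0 < y) : 0 ≤ singularIntegrand ε y := by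
  have hys := le_sqrt_add_sq hε hy.le
  have := K0_pos hy
  refine mul_nonneg (mul_nonneg (by positivity) ?_) (by positivity)
  exact sub_nonneg.2 (monotoneOn_hatK1_div_K0 hy (hy.trans_le hys) hys)

lemma singularIntegrand_le (hε : 0 ≤ ε) (hy : 0 < y) :
    singularIntegrand ε y ≤ √ε / ((ε + y ^ 2) * K0 √(ε + y ^ 2)) := by
  rw [singularIntegrand]
  set s := √(ε + y ^ 2)
  have hys : y ≤ s := le_sqrt_add_sq hε hy.le
  have hs : 0 < s := hy.trans_le hys
  have hsy : s - y ≤ √ε := by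
    rw [sub_le_iff_le_add, sqrt_le_left (by positivity)]
    nlinarith [sq_sqrt hε, sqrt_nonneg ε]
  have hK0y := K0_pos hy
  have hK0s := K0_pos hs
  calc 1 / (K0 y * (ε + y ^ 2)) * (hatK1 s / K0 s - hatK1 y / K0 y) * (y * K0 y ^ 2)
      = y * K0 y / (ε + y ^ 2) * (hatK1 s / K0 s - hatK1 y / K0 y) := by
        field_simp
    _ ≤ y * K0 y / (ε + y ^ 2) * ((s - y) / (y * K0 y * K0 s)) := by
        gcongr
        exact hatK1_div_K0_sub_le hy hys
    _ = (s - y) / ((ε + y ^ 2) * K0 s) := by field_simp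
    _ ≤ √ε / ((ε + y ^ 2) * K0 s) := by gcongr

/-- Splitting at `y² = d`: below, `K₀(√(ε + y²)) ≥ K₀(√(ε + d))`; above, the kernel of width
`√ε` is dominated by the kernel of width `√d`. -/
lemma singularIntegrand_le_add {d M : ℝ} (hε : 0 < ε) (hε1 : ε ≤ 1) (hd : 0 < d) (hy : 0 < y)
    (hyM : y ≤ M) :
    singularIntegrand ε y ≤ 1 / K0 √(ε + d) * (√ε / (ε + y ^ 2))
      + 2 * (√ε / √d) / K0 √(1 + M ^ 2) * (√d / (d + y ^ 2)) := by
  have hs : 0 < √(ε + y ^ 2) := sqrt_pos.2 (by positivity)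
  have hK0d := K0_pos (sqrt_pos.2 (by positivity : 0 < ε + d))
  have hK0M := K0_pos (sqrt_pos.2 (by positivity : 0 < 1 + M ^ 2))
  have hd' : 0 < √d := sqrt_pos.2 hd
  have hfirst : 0 ≤ 1 / K0 √(ε + d) * (√ε / (ε + y ^ 2)) := by positivity
  have hsecond : 0 ≤ 2 * (√ε / √d) / K0 √(1 + M ^ 2) * (√d / (d + y ^ 2)) := by positivity
  refine (singularIntegrand_le hε.le hy).trans ?_
  rw [← div_div]
  rcases le_total (y ^ 2) d with hyd | hyd
  · have hK0 : K0 √(ε + d) ≤ K0 √(ε + y ^ 2) :=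
      antitoneOn_K0 hs (sqrt_pos.2 (by positivity)) (sqrt_le_sqrt (by linarith))
    calc √ε / (ε + y ^ 2) / K0 √(ε + y ^ 2) ≤ √ε / (ε + y ^ 2) / K0 √(ε + d) := by gcongr
      _ = 1 / K0 √(ε + d) * (√ε / (ε + y ^ 2)) := by ring
      _ ≤ _ := le_add_of_nonneg_right hsecond
  · have hK0 : K0 √(1 + M ^ 2) ≤ K0 √(ε + y ^ 2) :=
      antitoneOn_K0 hs (sqrt_pos.2 (by positivity)) (sqrt_le_sqrt (by nlinarith))
    have hkernel : √ε / (ε + y ^ 2) ≤ √ε / ((d + y ^ 2) / 2) := by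
      gcongr
      linarith
    calc √ε / (ε + y ^ 2) / K0 √(ε + y ^ 2) ≤ √ε / ((d + y ^ 2) / 2) / K0 √(1 + M ^ 2) := by
          gcongr
      _ = 2 * (√ε / √d) / K0 √(1 + M ^ 2) * (√d / (d + y ^ 2)) := by field_simp
      _ ≤ _ := le_add_of_nonneg_left hfirst

end singularIntegrand

lemma setIntegral_singularIntegrand_le {ε d M : ℝ} (hε : 0 < ε) (hε1 : ε ≤ 1) (hd : 0 < d) :
    ∫ y in Ioc 0 M, singularIntegrand ε y
      ≤ π / 2 * (1 / K0 √(ε + d) + 2 * (√ε / √d) / K0 √(1 + M ^ 2)) := by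
  set A := 1 / K0 √(ε + d)
  set B := 2 * (√ε / √d) / K0 √(1 + M ^ 2)
  have hA : 0 ≤ A := by
    have := K0_pos (sqrt_pos.2 (by positivity : 0 < ε + d))
    positivity
  have hB : 0 ≤ B := by
    have := K0_pos (sqrt_pos.2 (by positivity : 0 < 1 + M ^ 2))
    positivity
  have hε' := ((continuous_sqrt_div_add_sq hε).integrableOn_Ioc (μ := volume) (a := 0)
    (b := M)).const_mul A
  have hd' := ((continuous_sqrt_div_add_sq hd).integrableOn_Ioc (μ := volume) (a := 0)
    (b := M)).const_mul B
  calc ∫ y in Ioc 0 M, singularIntegrand ε y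
      ≤ ∫ y in Ioc 0 M, (A * (√ε / (ε + y ^ 2)) + B * (√d / (d + y ^ 2))) :=
        integral_mono_of_nonneg
          (ae_restrict_of_forall_mem measurableSet_Ioc fun y hy =>
            singularIntegrand_nonneg hε.le hy.1)
          (hε'.add hd')
          (ae_restrict_of_forall_mem measurableSet_Ioc fun y hy =>
            singularIntegrand_le_add hε hε1 hd hy.1 hy.2)
    _ = A * (∫ y in Ioc 0 M, √ε / (ε + y ^ 2)) + B * ∫ y in Ioc 0 M, √d / (d + y ^ 2) := by
        rw [integral_add hε' hd', integral_const_mul, integral_const_mul]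
    _ ≤ A * (π / 2) + B * (π / 2) := by
        gcongr
        exacts [setIntegral_sqrt_div_add_sq_le hε M, setIntegral_sqrt_div_add_sq_le hd M]
    _ = _ := by ring

theorem singular_integral_vanishes_II_general (M : ℝ) :
    (∀ ε : ℝ, 0 < ε →
      0 ≤ ∫ y in Set.Ioc (0 : ℝ) M,
        (1 / (K0 y * (ε + y ^ 2)))
          * (hatK1 (Real.sqrt (ε + y ^ 2)) / K0 (Real.sqrt (ε + y ^ 2))
              - hatK1 y / K0 y)
          * (y * K0 y ^ 2)) ∧
    Tendsto
      (fun ε : ℝ => ∫ y in Set.Ioc (0 : ℝ) M,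
        (1 / (K0 y * (ε + y ^ 2)))
          * (hatK1 (Real.sqrt (ε + y ^ 2)) / K0 (Real.sqrt (ε + y ^ 2))
              - hatK1 y / K0 y)
          * (y * K0 y ^ 2))
      (nhdsWithin 0 (Set.Ioi 0)) (nhds 0) := by
  change (∀ ε : ℝ, 0 < ε → 0 ≤ ∫ y in Ioc 0 M, singularIntegrand ε y) ∧
    Tendsto (fun ε => ∫ y in Ioc 0 M, singularIntegrand ε y) (𝓝[>] 0) (𝓝 0)
  have hnonneg : ∀ ε : ℝ, 0 < ε → 0 ≤ ∫ y in Ioc 0 M, singularIntegrand ε y := fun ε hε =>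
    setIntegral_nonneg measurableSet_Ioc fun y hy => singularIntegrand_nonneg hε.le hy.1
  refine ⟨hnonneg, ?_⟩
  -- split at `y² = √ε`
  have hbound : ∀ ε ∈ Ioc (0 : ℝ) 1, ∫ y in Ioc 0 M, singularIntegrand ε y
      ≤ π / 2 * (1 / K0 √(ε + √ε) + 2 * √√ε / K0 √(1 + M ^ 2)) := fun ε hε => by
    simpa only [div_sqrt] using
      setIntegral_singularIntegrand_le (M := M) hε.1 hε.2 (sqrt_pos.2 hε.1)
  have hsmall : Tendsto (fun ε => √(ε + √ε)) (𝓝[>] 0) (𝓝[>] 0) := by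
    refine tendsto_nhdsWithin_iff.2 ⟨?_, eventually_nhdsWithin_of_forall fun ε hε => ?_⟩
    · simpa using ((by fun_prop : Continuous fun ε => √(ε + √ε)).tendsto 0).mono_left
        nhdsWithin_le_nhds
    · have : 0 < ε := hε
      exact sqrt_pos.2 (by positivity)
  have hlim : Tendsto (fun ε => π / 2 * (1 / K0 √(ε + √ε) + 2 * √√ε / K0 √(1 + M ^ 2)))
      (𝓝[>] 0) (𝓝 0) := by
    have h1 := (tendsto_K0_nhdsGT_zero.comp hsmall).inv_tendsto_atTop
    have h2 := (((by fun_prop : Continuous fun ε => 2 * √√ε).tendsto 0).mono_left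
      (nhdsWithin_le_nhds (s := Ioi 0))).div_const (K0 √(1 + M ^ 2))
    simpa using (h1.add h2).const_mul (π / 2)
  exact tendsto_of_tendsto_of_tendsto_of_le_of_le' tendsto_const_nhds hlim
    (eventually_nhdsWithin_of_forall hnonneg)
    (eventually_of_mem (Ioc_mem_nhdsGT zero_lt_one) hbound)

/-- Assertion (5.48) of Lemma 5.8: the singular integral
`∫₀^M [1/(K₀(y)(ε+y²))] (K̂₁/K₀(√(ε+y²)) − K̂₁/K₀(y)) y K₀(y)² dy`
is nonnegative and converges to `0` as `ε → 0+`. -/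
theorem singular_integral_vanishes_II (M : ℝ) (hM : 0 < M) :
    (∀ ε : ℝ, 0 < ε →
      0 ≤ ∫ y in Set.Ioc (0 : ℝ) M,
        (1 / (K0 y * (ε + y ^ 2)))
          * (hatK1 (Real.sqrt (ε + y ^ 2)) / K0 (Real.sqrt (ε + y ^ 2))
              - hatK1 y / K0 y)
          * (y * K0 y ^ 2)) ∧
    Tendsto
      (fun ε : ℝ => ∫ y in Set.Ioc (0 : ℝ) M,
        (1 / (K0 y * (ε + y ^ 2)))
          * (hatK1 (Real.sqrt (ε + y ^ 2)) / K0 (Real.sqrt (ε + y ^ 2))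
              - hatK1 y / K0 y)
          * (y * K0 y ^ 2))
      (nhdsWithin 0 (Set.Ioi 0)) (nhds 0) :=
  singular_integral_vanishes_II_general M
end

section
/- One has lim_{ε → 0+} ∫₀^{1/2} ( y/(ε + y²) ) · ( (−log y)/(log(ε + y²))² ) · log(1 + ε/y²) dy = 0. -/
/-!
Split `(0, 1/2]` at `√ε` and `ε^{1/4}`. For `y ≤ √ε` we have `ε + y² ≤ 2ε ≤ √ε`, so
`log² (ε + y²) ≥ log² √ε`, and `log (1 + t) ≤ 2√t` bounds the integrand by
`2 (-log y) / (√ε log² √ε)`, whose integral over `(0, √ε]` is `O(1 / |log ε|)`.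
For `√ε ≤ y ≤ 1/2` we have `ε + y² ≤ 2y² ≤ y`, so `log² (ε + y²) ≥ log² y`, and
`log (1 + t) ≤ t` bounds the integrand by `ε / (y³ (-log y))`. Integrating `y⁻³` against the
lower bound `-log y ≥ |log ε| / 4` on `(√ε, ε^{1/4}]` gives `O(1 / |log ε|)`, and against
`-log y ≥ log 2` on `(ε^{1/4}, 1/2]` gives `O(√ε)`.
-/

open MeasureTheory Filter Set Topology Real

noncomputable def singularLogIntegrand (ε y : ℝ) : ℝ :=
  (y / (ε + y ^ 2)) * ((-log y) / (log (ε + y ^ 2)) ^ 2) * log (1 + ε / y ^ 2)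

lemma log_one_add_le_two_mul_sqrt {t : ℝ} (ht : 0 ≤ t) : log (1 + t) ≤ 2 * √t :=
  calc log (1 + t) ≤ log ((1 + √t) ^ 2) :=
        log_le_log (by positivity) (by nlinarith [sq_sqrt ht, sqrt_nonneg t])
    _ = 2 * log (1 + √t) := by rw [log_pow]; norm_num
    _ ≤ 2 * √t := by gcongr; linarith [log_le_sub_one_of_pos (by positivity : 0 < 1 + √t)]

lemma log_sq_le_log_sq {a b : ℝ} (ha : 0 < a) (hab : a ≤ b) (hb : b ≤ 1) :
    log b ^ 2 ≤ log a ^ 2 := by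
  have := log_le_log ha hab
  have := log_nonpos (ha.le.trans hab) hb
  nlinarith

lemma measurable_singularLogIntegrand (ε : ℝ) : Measurable (singularLogIntegrand ε) := by
  unfold singularLogIntegrand
  fun_prop

lemma singularLogIntegrand_nonneg {ε y : ℝ} (hε : 0 ≤ ε) (hy : 0 < y) (hy1 : y ≤ 1) :
    0 ≤ singularLogIntegrand ε y := by
  have : 0 ≤ -log y := neg_nonneg.2 (log_nonpos hy.le hy1)
  have : 0 ≤ log (1 + ε / y ^ 2) := log_nonneg (le_add_of_nonneg_right (by positivity))
  unfold singularLogIntegrand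
  positivity

lemma singularLogIntegrand_le_of_le_sqrt {ε y : ℝ} (hε : ε ≤ 1 / 4) (hy : 0 < y) (hys : y ≤ √ε) :
    singularLogIntegrand ε y ≤ 2 * (-log y) / (√ε * log √ε ^ 2) := by
  set s := √ε
  have hs : 0 < s := hy.trans_le hys
  have hε0 : 0 < ε := sqrt_pos.1 hs
  have hs2 : s ^ 2 = ε := sq_sqrt hε0.le
  have hs_half : s ≤ 1 / 2 := by nlinarith
  have hℓ : 0 ≤ -log y := neg_nonneg.2 (log_nonpos hy.le (by linarith))
  have hlogs : log s ≠ 0 := (log_neg hs (by linarith)).ne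
  have hlog : log s ^ 2 ≤ log (ε + y ^ 2) ^ 2 :=
    log_sq_le_log_sq (by positivity) (by nlinarith) (by linarith)
  have hlog1 : log (1 + ε / y ^ 2) ≤ 2 * (s / y) := by
    have hsqrt : √(ε / y ^ 2) = s / y := by rw [sqrt_div' _ (sq_nonneg y), sqrt_sq hy.le]
    exact hsqrt ▸ log_one_add_le_two_mul_sqrt (by positivity)
  calc singularLogIntegrand ε y
      ≤ (y / ε) * ((-log y) / log s ^ 2) * (2 * (s / y)) := by
        unfold singularLogIntegrand
        have : 0 ≤ log (1 + ε / y ^ 2) := log_nonneg (le_add_of_nonneg_right (by positivity))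
        gcongr
        exact le_add_of_nonneg_right (sq_nonneg y)
    _ = 2 * (-log y) / (s * log s ^ 2) := by
        rw [← hs2]; field_simp

lemma singularLogIntegrand_le_of_sqrt_le {ε y : ℝ} (hε : 0 < ε) (hys : √ε ≤ y) (hy : y ≤ 1 / 2) :
    singularLogIntegrand ε y ≤ ε / (y ^ 3 * (-log y)) := by
  have hy0 : 0 < y := (sqrt_pos.2 hε).trans_le hys
  have hεy : ε ≤ y ^ 2 := (sqrt_le_left hy0.le).1 hys
  have hℓ : 0 < -log y := neg_pos.2 (log_neg hy0 (by linarith))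
  have hlogy : log y ≠ 0 := by linarith
  have hlog : log y ^ 2 ≤ log (ε + y ^ 2) ^ 2 :=
    log_sq_le_log_sq (by positivity) (by nlinarith) (by linarith)
  have hlog1 : log (1 + ε / y ^ 2) ≤ ε / y ^ 2 := by
    linarith [log_le_sub_one_of_pos (by positivity : 0 < 1 + ε / y ^ 2)]
  calc singularLogIntegrand ε y
      ≤ (y / y ^ 2) * ((-log y) / log y ^ 2) * (ε / y ^ 2) := by
        have : 0 ≤ log (1 + ε / y ^ 2) := log_nonneg (le_add_of_nonneg_right (by positivity))
        unfold singularLogIntegrand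
        gcongr
        exact le_add_of_nonneg_left hε.le
    _ = ε / (y ^ 3 * (-log y)) := by field_simp

lemma integrableOn_of_nonneg_of_le {α : Type*} [MeasurableSpace α] {μ : Measure α}
    {f g : α → ℝ} {s : Set α} (hs : MeasurableSet s) (hf : AEStronglyMeasurable f (μ.restrict s))
    (h₀ : ∀ x ∈ s, 0 ≤ f x) (hfg : ∀ x ∈ s, f x ≤ g x) (hg : IntegrableOn g s μ) :
    IntegrableOn f s μ :=
  integrable_of_le_of_le hf ((ae_restrict_iff' hs).2 (.of_forall h₀))
    ((ae_restrict_iff' hs).2 (.of_forall hfg)) (integrable_zero _ _ _) hg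

lemma integrableOn_Ioc_inv_pow_three {a b : ℝ} (ha : 0 < a) (hab : a ≤ b) :
    IntegrableOn (fun y : ℝ ↦ (y ^ 3)⁻¹) (Ioc a b) := by
  have := intervalIntegral.intervalIntegrable_zpow (μ := volume) (n := -3)
    (Or.inr (notMem_uIcc_of_lt ha (ha.trans_le hab)))
  simpa [zpow_neg, intervalIntegrable_iff_integrableOn_Ioc_of_le hab] using this

lemma setIntegral_Ioc_inv_pow_three {a b : ℝ} (ha : 0 < a) (hab : a ≤ b) :
    ∫ y in Ioc a b, (y ^ 3)⁻¹ = ((a ^ 2)⁻¹ - (b ^ 2)⁻¹) / 2 := by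
  have := integral_zpow (a := a) (b := b) (n := -3)
    (Or.inr ⟨by norm_num, notMem_uIcc_of_lt ha (ha.trans_le hab)⟩)
  simp only [Int.reduceNeg, zpow_neg, zpow_ofNat, intervalIntegral.integral_of_le hab,
    Int.reduceAdd, Int.cast_neg, Int.cast_ofNat] at this
  rw [this]
  ring

lemma singularLogIntegrand_Ioc_zero_sqrt {ε : ℝ} (hε0 : 0 < ε) (hε : ε ≤ 1 / 4) :
    IntegrableOn (singularLogIntegrand ε) (Ioc 0 √ε) ∧
      ∫ y in Ioc 0 √ε, singularLogIntegrand ε y ≤ 2 * (1 - log √ε) / log √ε ^ 2 := by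
  set s := √ε
  have hs : 0 < s := sqrt_pos.2 hε0
  have hs1 : s ≤ 1 := by nlinarith [sq_sqrt hε0.le]
  set g : ℝ → ℝ := fun y ↦ 2 / (s * log s ^ 2) * -log y
  have hg : IntegrableOn g (Ioc 0 s) := by
    have := (intervalIntegral.intervalIntegrable_log' (a := 0) (b := s)).neg.const_mul
      (2 / (s * log s ^ 2))
    rwa [intervalIntegrable_iff_integrableOn_Ioc_of_le hs.le] at this
  have hf0 : ∀ y ∈ Ioc 0 s, 0 ≤ singularLogIntegrand ε y := fun y hy ↦
    singularLogIntegrand_nonneg hε0.le hy.1 (hy.2.trans hs1)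
  have hfg : ∀ y ∈ Ioc 0 s, singularLogIntegrand ε y ≤ g y := fun y hy ↦
    (singularLogIntegrand_le_of_le_sqrt hε hy.1 hy.2).trans_eq (by ring)
  refine ⟨integrableOn_of_nonneg_of_le measurableSet_Ioc
    (measurable_singularLogIntegrand ε).aestronglyMeasurable hf0 hfg hg,
    (setIntegral_mono_of_nonneg hf0 hfg hg).trans_eq ?_⟩
  rw [← intervalIntegral.integral_of_le hs.le]
  simp only [g, intervalIntegral.integral_const_mul, intervalIntegral.integral_neg,
    integral_log_from_zero]
  field_simp
  ring

lemma singularLogIntegrand_Ioc_of_sqrt_le {ε a b : ℝ} (hε : 0 < ε) (ha : √ε ≤ a) (hab : a ≤ b)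
    (hb : b ≤ 1 / 2) :
    IntegrableOn (singularLogIntegrand ε) (Ioc a b) ∧
      ∫ y in Ioc a b, singularLogIntegrand ε y ≤ ε / (2 * a ^ 2 * -log b) := by
  have ha0 : 0 < a := (sqrt_pos.2 hε).trans_le ha
  have hb0 : 0 < -log b := neg_pos.2 (log_neg (ha0.trans_le hab) (by linarith))
  set g : ℝ → ℝ := fun y ↦ ε / -log b * (y ^ 3)⁻¹
  have hg : IntegrableOn g (Ioc a b) := (integrableOn_Ioc_inv_pow_three ha0 hab).const_mul _
  have hf0 : ∀ y ∈ Ioc a b, 0 ≤ singularLogIntegrand ε y := fun y hy ↦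
    singularLogIntegrand_nonneg hε.le (ha0.trans hy.1) (by linarith [hy.2])
  have hfg : ∀ y ∈ Ioc a b, singularLogIntegrand ε y ≤ g y := fun y hy ↦ by
    have hy0 : 0 < y := ha0.trans hy.1
    calc singularLogIntegrand ε y ≤ ε / (y ^ 3 * -log y) :=
          singularLogIntegrand_le_of_sqrt_le hε (ha.trans hy.1.le) (hy.2.trans hb)
      _ ≤ ε / (y ^ 3 * -log b) := by gcongr; exact hy.2
      _ = g y := by simp only [g]; field_simp
  refine ⟨integrableOn_of_nonneg_of_le measurableSet_Ioc
    (measurable_singularLogIntegrand ε).aestronglyMeasurable hf0 hfg hg,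
    (setIntegral_mono_of_nonneg hf0 hfg hg).trans ?_⟩
  rw [integral_const_mul, setIntegral_Ioc_inv_pow_three ha0 hab]
  have : 0 ≤ (b ^ 2)⁻¹ := by positivity
  calc ε / -log b * (((a ^ 2)⁻¹ - (b ^ 2)⁻¹) / 2) ≤ ε / -log b * ((a ^ 2)⁻¹ / 2) := by
        gcongr; linarith
    _ = ε / (2 * a ^ 2 * -log b) := by field_simp

lemma setIntegral_Ioc_eq_add {E : Type*} [NormedAddCommGroup E] [NormedSpace ℝ E] {f : ℝ → E}
    {a b c : ℝ} (hab : a ≤ b) (hbc : b ≤ c) (hf₁ : IntegrableOn f (Ioc a b))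
    (hf₂ : IntegrableOn f (Ioc b c)) :
    ∫ y in Ioc a c, f y = (∫ y in Ioc a b, f y) + ∫ y in Ioc b c, f y := by
  rw [← Ioc_union_Ioc_eq_Ioc hab hbc,
    setIntegral_union (Ioc_disjoint_Ioc_of_le le_rfl) measurableSet_Ioc hf₁ hf₂]

lemma setIntegral_singularLogIntegrand_le {ε : ℝ} (hε0 : 0 < ε) (hε : ε ≤ 1 / 16) :
    ∫ y in Ioc 0 (1 / 2), singularLogIntegrand ε y ≤ 10 / -log ε + √ε := by
  set s := √ε with hs_def
  set q := √s
  have hs0 : 0 < s := sqrt_pos.2 hε0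
  have hs2 : s ^ 2 = ε := sq_sqrt hε0.le
  have hq2 : q ^ 2 = s := sq_sqrt hs0.le
  have hs : s ≤ 1 / 4 := by nlinarith
  have hq : q ≤ 1 / 2 := by nlinarith [sqrt_nonneg s]
  have hsq : s ≤ q := by nlinarith [sqrt_nonneg s]
  have hlogs : log s = log ε / 2 := log_sqrt hε0.le
  have hlogq : log q = log ε / 4 := by rw [log_sqrt hs0.le, hlogs]; ring
  have hX : 2 ≤ -log ε := by
    have := log_le_log hε0 hε
    have : log (1 / 16 : ℝ) = -(4 * log 2) := by
      rw [one_div, log_inv, show (16 : ℝ) = 2 ^ 4 by norm_num, log_pow]; norm_num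
    linarith [log_two_gt_d9]
  obtain ⟨hI₁, hle₁⟩ := singularLogIntegrand_Ioc_zero_sqrt hε0 (by linarith)
  obtain ⟨hI₂, hle₂⟩ := singularLogIntegrand_Ioc_of_sqrt_le hε0 le_rfl hsq hq
  obtain ⟨hI₃, hle₃⟩ := singularLogIntegrand_Ioc_of_sqrt_le hε0 hsq hq le_rfl
  have hI₂₃ := (singularLogIntegrand_Ioc_of_sqrt_le hε0 le_rfl (hsq.trans hq) le_rfl).1
  rw [← hs_def] at hI₁ hle₁ hle₂ hI₂₃
  have hb₁ : 2 * (1 - log s) / log s ^ 2 ≤ 8 / -log ε := by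
    rw [hlogs, div_le_div_iff₀ (by nlinarith) (by linarith)]
    nlinarith
  have hb₂ : ε / (2 * s ^ 2 * -log q) = 2 / -log ε := by
    rw [hlogq, hs2]; field_simp; ring
  have hb₃ : ε / (2 * q ^ 2 * -log (1 / 2)) ≤ s := by
    rw [hq2, one_div, log_inv, neg_neg, ← hs2, div_le_iff₀ (by positivity)]
    nlinarith [log_two_gt_d9]
  rw [setIntegral_Ioc_eq_add hs0.le (hsq.trans hq) hI₁ hI₂₃,
    setIntegral_Ioc_eq_add hsq hq hI₂ hI₃, show 10 / -log ε = 8 / -log ε + 2 / -log ε by ring]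
  linarith

/-- A real-analysis limit from the proof of Lemma 5.8:
`∫₀^{1/2} (y/(ε+y²)) ((−log y)/(log(ε+y²))²) log(1+ε/y²) dy → 0` as `ε → 0+`. -/
theorem singular_log_integral_vanishes :
    Tendsto
      (fun ε : ℝ => ∫ y in Set.Ioc (0 : ℝ) (1 / 2),
        (y / (ε + y ^ 2)) * ((-Real.log y) / (Real.log (ε + y ^ 2)) ^ 2)
          * Real.log (1 + ε / y ^ 2))
      (nhdsWithin 0 (Set.Ioi 0)) (nhds 0) := by
  have hbound : Tendsto (fun ε : ℝ ↦ 10 / -log ε + √ε) (𝓝[>] 0) (𝓝 0) := by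
    have hlog : Tendsto (fun ε : ℝ ↦ -log ε) (𝓝[>] 0) atTop :=
      tendsto_neg_atBot_atTop.comp tendsto_log_nhdsGT_zero
    have hsqrt : Tendsto (fun ε : ℝ ↦ √ε) (𝓝[>] 0) (𝓝 0) := by
      simpa using (continuous_sqrt.tendsto 0).mono_left nhdsWithin_le_nhds
    simpa using (hlog.const_div_atTop 10).add hsqrt
  refine tendsto_of_tendsto_of_tendsto_of_le_of_le' tendsto_const_nhds hbound ?_ ?_
  · filter_upwards [self_mem_nhdsWithin] with ε hε
    exact setIntegral_nonneg measurableSet_Ioc fun y hy ↦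
      singularLogIntegrand_nonneg (le_of_lt hε) hy.1 (by linarith [hy.2])
  · filter_upwards [self_mem_nhdsWithin,
      nhdsWithin_le_nhds (gt_mem_nhds (by norm_num : (0 : ℝ) < 1 / 16))] with ε hε0 hε
    exact setIntegral_singularLogIntegrand_le hε0 hε.le
end

section
/- One has lim_{ε → 0+} ∫₀^{1/2} ( y/(ε + y²) ) · [ −(ε + y²)(log(ε + y²) − 1) + y²(log(y²) − 1) ] / (log(ε + y²))² · (log y)² dy = 0. -/
set_option maxHeartbeats 1000000

open MeasureTheory Filter Set Topology

private lemma pointwise_bound' {ε y : ℝ} (hε : ε ∈ Set.Ioo (0:ℝ) (1/4)) (hy : y ∈ Set.Ioc (0:ℝ) (1/2)) :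
    ‖(y / (ε + y ^ 2))
          * ((-((ε + y ^ 2) * (Real.log (ε + y ^ 2) - 1))
              + y ^ 2 * (Real.log (y ^ 2) - 1)) / (Real.log (ε + y ^ 2)) ^ 2)
          * (Real.log y) ^ 2‖ ≤ Real.sqrt ε * (216 / (Real.log 2)^2) * y ^ (-(1/2) : ℝ) := by
  obtain ⟨hε0, hε4⟩ := hε
  obtain ⟨hy0, hy2⟩ := hy
  set s := ε + y ^ 2 with hs_def
  have hy2pos : (0:ℝ) < y ^ 2 := by positivity
  have hs0 : 0 < s := by positivity
  have hs1 : s ≤ 1/2 := by nlinarith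
  have hlogs_neg : Real.log s ≤ -Real.log 2 := by
    have := Real.log_le_log hs0 hs1
    rwa [show (1:ℝ)/2 = 2⁻¹ by norm_num, Real.log_inv] at this
  have hlog2pos : (0:ℝ) < Real.log 2 := Real.log_pos (by norm_num)
  have hlogsq : (Real.log 2)^2 ≤ (Real.log s)^2 := by
    have h1 : |Real.log 2| ≤ |Real.log s| := by
      rw [abs_of_pos hlog2pos, abs_of_nonpos (by linarith)]; linarith
    calc (Real.log 2)^2 = |Real.log 2|^2 := (sq_abs _).symm
      _ ≤ |Real.log s|^2 := pow_le_pow_left₀ (abs_nonneg _) h1 2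
      _ = (Real.log s)^2 := sq_abs _
  have hlogdiv : Real.log s - Real.log (y^2) = Real.log (s / y^2) := by
    rw [Real.log_div (ne_of_gt hs0) (ne_of_gt hy2pos)]
  have k1 : Real.log s - Real.log (y^2) ≤ ε / y^2 := by
    rw [hlogdiv]
    have := Real.log_le_sub_one_of_pos (x := s / y^2) (by positivity)
    have hd : s / y^2 - 1 = ε / y^2 := by field_simp; ring
    linarith [hd ▸ this]
  have k2 : ε ≤ s * (Real.log s - Real.log (y^2)) := by
    have := Real.log_le_sub_one_of_pos (x := y^2 / s) (by positivity)
    have hlog' : Real.log (y^2 / s) = -(Real.log s - Real.log (y^2)) := by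
      rw [Real.log_div (ne_of_gt hy2pos) (ne_of_gt hs0)]; ring
    rw [hlog'] at this
    have h2 : 1 - y^2 / s ≤ Real.log s - Real.log (y^2) := by linarith
    have := mul_le_mul_of_nonneg_left h2 (le_of_lt hs0)
    have hss : s * (1 - y^2/s) = ε := by field_simp; ring
    linarith [hss ▸ this]
  set N := -(s * (Real.log s - 1)) + y ^ 2 * (Real.log (y ^ 2) - 1) with hN_def
  have hlogs0 : Real.log s ≤ 0 := by linarith
  have hlogy2 : Real.log (y^2) ≤ Real.log s := by
    apply Real.log_le_log hy2pos; nlinarith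
  have hid : N = ε - ε * Real.log s - y^2 * (Real.log s - Real.log (y^2)) := by
    rw [hN_def, hs_def]; ring
  have k1' : y^2 * (Real.log s - Real.log (y^2)) ≤ ε := by
    have h := mul_le_mul_of_nonneg_left k1 (le_of_lt hy2pos)
    rwa [mul_div_cancel₀ _ (ne_of_gt hy2pos)] at h
  have hεlogs : ε * Real.log s ≤ 0 := mul_nonpos_of_nonneg_of_nonpos (le_of_lt hε0) hlogs0
  have hN0 : 0 ≤ N := by linarith
  have k2' : ε ≤ ε * (Real.log s - Real.log (y^2)) + y^2 * (Real.log s - Real.log (y^2)) := by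
    have h : s * (Real.log s - Real.log (y^2))
        = ε * (Real.log s - Real.log (y^2)) + y^2 * (Real.log s - Real.log (y^2)) := by
      rw [hs_def]; ring
    linarith [h ▸ k2]
  have hN1 : N ≤ -(ε * Real.log (y^2)) := by
    have hexp : ε * (Real.log s - Real.log (y^2)) = ε * Real.log s - ε * Real.log (y^2) := by ring
    linarith [hexp ▸ k2']
  have hlogy_neg : Real.log y < 0 := Real.log_neg hy0 (by linarith)
  have hf_nonneg : 0 ≤ (y / s) * (N / (Real.log s)^2) * (Real.log y)^2 := by
    apply mul_nonneg (mul_nonneg (by positivity) (div_nonneg hN0 (by positivity))) (by positivity)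
  rw [Real.norm_eq_abs, abs_of_nonneg hf_nonneg]
  have hlog2sq : (0:ℝ) < (Real.log 2)^2 := by positivity
  have step1 : N / (Real.log s)^2 ≤ (-(ε * Real.log (y^2))) / (Real.log 2)^2 := by
    apply div_le_div₀ (by nlinarith [hN1]) hN1 hlog2sq hlogsq
  have hsqrt : Real.sqrt ε ^ 2 = ε := Real.sq_sqrt (le_of_lt hε0)
  have hsqrt_pos : 0 < Real.sqrt ε := Real.sqrt_pos.mpr hε0
  have hams : y * ε / s ≤ Real.sqrt ε / 2 := by
    rw [div_le_div_iff₀ hs0 (by norm_num)]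
    nlinarith [sq_nonneg (Real.sqrt ε - y)]
  have step3 : (-Real.log y)^3 ≤ 216 * y ^ (-(1/2) : ℝ) := by
    have h6 : -Real.log y ≤ 6 * (y⁻¹) ^ ((1:ℝ)/6) := by
      have := Real.log_le_rpow_div (x := y⁻¹) (by positivity) (ε := 1/6) (by norm_num)
      rw [Real.log_inv] at this
      linarith [this]
    have hc : ((y⁻¹) ^ ((1:ℝ)/6))^3 = y ^ (-(1/2) : ℝ) := by
      rw [← Real.rpow_natCast ((y⁻¹) ^ ((1:ℝ)/6)) 3, ← Real.rpow_mul (by positivity),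
        ← Real.rpow_neg_one y, ← Real.rpow_mul (le_of_lt hy0)]
      norm_num
    calc (-Real.log y)^3 ≤ (6 * (y⁻¹) ^ ((1:ℝ)/6))^3 := by
          apply pow_le_pow_left₀ (by linarith) h6
      _ = 216 * ((y⁻¹) ^ ((1:ℝ)/6))^3 := by ring
      _ = 216 * y ^ (-(1/2) : ℝ) := by rw [hc]
  have hlogy2' : Real.log (y^2) = 2 * Real.log y := by
    rw [show y^2 = y*y by ring, Real.log_mul (ne_of_gt hy0) (ne_of_gt hy0)]; ring
  calc (y / s) * (N / (Real.log s)^2) * (Real.log y)^2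
      ≤ (y / s) * ((-(ε * Real.log (y^2))) / (Real.log 2)^2) * (Real.log y)^2 := by
        apply mul_le_mul_of_nonneg_right (mul_le_mul_of_nonneg_left step1 (by positivity)) (by positivity)
    _ = (y * ε / s) * ((-Real.log y) * (Real.log y)^2) * (2 / (Real.log 2)^2) := by
        rw [hlogy2']; field_simp
    _ ≤ (Real.sqrt ε / 2) * (216 * y ^ (-(1/2) : ℝ)) * (2 / (Real.log 2)^2) := by
        apply mul_le_mul_of_nonneg_right _ (by positivity)
        apply mul_le_mul hams _ (by nlinarith [sq_nonneg (Real.log y)]) (by positivity)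
        calc (-Real.log y) * (Real.log y)^2 = (-Real.log y)^3 := by ring
          _ ≤ 216 * y ^ (-(1/2) : ℝ) := step3
    _ = Real.sqrt ε * (216 / (Real.log 2)^2) * y ^ (-(1/2) : ℝ) := by ring

private lemma rpow_integrable' : IntegrableOn (fun y : ℝ => y ^ (-(1/2) : ℝ)) (Set.Ioc (0:ℝ) (1/2)) := by
  rw [← intervalIntegrable_iff_integrableOn_Ioc_of_le (by norm_num : (0:ℝ) ≤ 1/2)]
  exact intervalIntegral.intervalIntegrable_rpow' (by norm_num)

private lemma integral_bound' (ε : ℝ) (hε : ε ∈ Set.Ioo (0:ℝ) (1/4)) :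
    ‖∫ y in Set.Ioc (0 : ℝ) (1 / 2),
        (y / (ε + y ^ 2))
          * ((-((ε + y ^ 2) * (Real.log (ε + y ^ 2) - 1))
              + y ^ 2 * (Real.log (y ^ 2) - 1)) / (Real.log (ε + y ^ 2)) ^ 2)
          * (Real.log y) ^ 2‖
      ≤ Real.sqrt ε * ((216 / (Real.log 2)^2) * ∫ y in Set.Ioc (0:ℝ) (1/2), y ^ (-(1/2) : ℝ)) := by
  have hg : Integrable (fun y : ℝ => Real.sqrt ε * (216 / (Real.log 2)^2) * y ^ (-(1/2) : ℝ))
      (volume.restrict (Set.Ioc (0:ℝ) (1/2))) := rpow_integrable'.const_mul _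
  have hae : ∀ᵐ y ∂(volume.restrict (Set.Ioc (0:ℝ) (1/2))),
      ‖(y / (ε + y ^ 2))
          * ((-((ε + y ^ 2) * (Real.log (ε + y ^ 2) - 1))
              + y ^ 2 * (Real.log (y ^ 2) - 1)) / (Real.log (ε + y ^ 2)) ^ 2)
          * (Real.log y) ^ 2‖ ≤ Real.sqrt ε * (216 / (Real.log 2)^2) * y ^ (-(1/2) : ℝ) := by
    filter_upwards [ae_restrict_mem measurableSet_Ioc] with y hy using pointwise_bound' hε hy
  calc ‖_‖ ≤ ∫ y in Set.Ioc (0:ℝ) (1/2), Real.sqrt ε * (216 / (Real.log 2)^2) * y ^ (-(1/2) : ℝ) :=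
        norm_integral_le_of_norm_le hg hae
    _ = Real.sqrt ε * ((216 / (Real.log 2)^2) * ∫ y in Set.Ioc (0:ℝ) (1/2), y ^ (-(1/2) : ℝ)) := by
        rw [show (fun y : ℝ => Real.sqrt ε * (216 / (Real.log 2)^2) * y ^ (-(1/2) : ℝ))
            = fun y : ℝ => (Real.sqrt ε * (216 / (Real.log 2)^2)) * y ^ (-(1/2) : ℝ) from rfl,
          MeasureTheory.integral_const_mul, mul_assoc]

/-- A real-analysis limit from the proof of Lemma 5.8:
`∫₀^{1/2} (y/(ε+y²)) [−(ε+y²)(log(ε+y²)−1) + y²(log(y²)−1)]/(log(ε+y²))² (log y)² dy → 0`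
as `ε → 0+`. -/
theorem singular_log_integral_vanishes' :
    Tendsto
      (fun ε : ℝ => ∫ y in Set.Ioc (0 : ℝ) (1 / 2),
        (y / (ε + y ^ 2))
          * ((-((ε + y ^ 2) * (Real.log (ε + y ^ 2) - 1))
              + y ^ 2 * (Real.log (y ^ 2) - 1)) / (Real.log (ε + y ^ 2)) ^ 2)
          * (Real.log y) ^ 2)
      (nhdsWithin 0 (Set.Ioi 0)) (nhds 0) := by
  set C : ℝ := (216 / (Real.log 2)^2) * ∫ y in Set.Ioc (0:ℝ) (1/2), y ^ (-(1/2) : ℝ) with hC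
  apply squeeze_zero_norm' (a := fun ε => Real.sqrt ε * C)
  · filter_upwards [Ioo_mem_nhdsGT_of_mem (by norm_num : (0:ℝ) ∈ Set.Ico (0:ℝ) (1/4))] with ε hε
    exact integral_bound' ε hε
  · have h1 : Tendsto (fun ε : ℝ => Real.sqrt ε) (nhdsWithin 0 (Set.Ioi 0)) (nhds 0) := by
      have := (Real.continuous_sqrt.tendsto 0).mono_left
        (nhdsWithin_le_nhds (s := Set.Ioi (0:ℝ)))
      simpa using this
    simpa using h1.mul_const C
end
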